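/- In SP_9, for every positive edge uv there exists a unique vertex z such that both uz and vz are positive edges. -/

import Mathlib

/-- Vertices of `SP_9`, identified with `{0,1,2} × {0,1,2}`. -/
abbrev V9 : Type := Fin 3 × Fin 3

/-- The edge `uv` of `SP_9` is positive: `u ≠ v` and they agree in exactly one coordinate. -/
abbrev pos9 (u v : V9) : Prop :=
  (u.1 = v.1 ∧ u.2 ≠ v.2) ∨ (u.1 ≠ v.1 ∧ u.2 = v.2)

/-- The edge `uv` of `SP_9` is negative: `u ≠ v` and it is not positive. -/
abbrev neg9 (u v : V9) : Prop := u ≠ v ∧ ¬ pos9 u v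

/-! The positive graph is the rook's graph `K₃ □ K₃`. If `u` and `v` share a row, a vertex
outside that row agrees with them in at most one column, so it is positively joined to at most one
of them; the common positive neighbours are thus the vertices of the row other than `u` and `v`,
of which there is exactly one. The column case follows by transposing. -/

theorem existsUnique_ne_ne_of_card_eq_three {α : Type*} [Fintype α]
    (hα : Fintype.card α = 3) {a b : α} (hab : a ≠ b) : ∃! c, c ≠ a ∧ c ≠ b := by
  classical
  have hcard : ({a, b}ᶜ : Finset α).card = 1 := by
    rw [Finset.card_compl, Finset.card_pair hab, hα]
  obtain ⟨c, hc⟩ := Finset.card_eq_one.mp hcard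
  have hmem : ∀ x, x ≠ a ∧ x ≠ b ↔ x = c := fun x => by
    simpa [not_or] using Finset.ext_iff.mp hc x
  exact ⟨c, (hmem c).mpr rfl, fun x hx => (hmem x).mp hx⟩

theorem pos9_swap_left {u z : V9} : pos9 u.swap z ↔ pos9 u z.swap := by
  unfold pos9
  simp only [Prod.fst_swap, Prod.snd_swap]
  tauto

theorem pos9_and_pos9_iff_of_fst_eq {u v z : V9} (h₁ : u.1 = v.1) (h₂ : u.2 ≠ v.2) :
    pos9 u z ∧ pos9 v z ↔ z.1 = u.1 ∧ z.2 ≠ u.2 ∧ z.2 ≠ v.2 := by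
  grind

theorem existsUnique_common_pos9_of_fst_eq {u v : V9} (h₁ : u.1 = v.1) (h₂ : u.2 ≠ v.2) :
    ∃! z : V9, pos9 u z ∧ pos9 v z := by
  simp_rw [pos9_and_pos9_iff_of_fst_eq h₁ h₂]
  obtain ⟨c, hc, hc_unique⟩ := existsUnique_ne_ne_of_card_eq_three (Fintype.card_fin 3) h₂
  exact ⟨(u.1, c), ⟨rfl, hc⟩, fun z hz => Prod.ext hz.1 (hc_unique _ hz.2)⟩

theorem sp9_pos_edge_unique_common_pos :
    ∀ u v : V9, pos9 u v → ∃! z : V9, pos9 u z ∧ pos9 v z := by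
  rintro u v (⟨h₁, h₂⟩ | ⟨h₂, h₁⟩)
  · exact existsUnique_common_pos9_of_fst_eq h₁ h₂
  · refine (Equiv.prodComm _ _).existsUnique_congr (fun z => ?_) |>.mp
      (existsUnique_common_pos9_of_fst_eq (u := u.swap) (v := v.swap) h₁ h₂)
    simp [pos9_swap_left]
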